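/- arXiv:1606.00236 — 2 statements merged into one kernel-verified Lean document; each statement's English description precedes it below -/
import Mathlib

section
/- Let $(Z_n)_{n\ge 0}$ be a centered process with stationary increments, $Z_0=0$, and $(a_n)$ a regularly varying sequence of exponent $\gamma\in(0,1)$ such that $B:=\lim_n a_n^{-1}\mathbb{E}[\max_{1\le k\le n}Z_k]$ exists in $(0,\infty)$. If moreover the negative part $(Z_1)_- = \max(-Z_1,0)$ is bounded, and $\max_{0\le k\le n}Z_k$ has moments controlled so that $\|\max_{0\le k\le n}Z_k\|_p = O(a_n)$ for some $p>1$, then there exists $c>0$ such that for all $n\ge 1$, $\mathbb{P}(\max_{1\le\ell\le n} Z_\ell < 0) \ge c\, a_n/n$. -/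
/-
Let `L n = 𝔼 max_{1 ≤ k ≤ n} Z k` and `P n = ℙ (max_{1 ≤ k ≤ n} Z k < 0)`. Removing `Z 1` from the
running maximum up to `n + 1` leaves the maximum of `0` and the running maximum up to `n` of the
increments `Z (k + 1) - Z 1`, which have the law of `Z`; with centering this gives
`L (n + 1) - L n = 𝔼 (max_{1 ≤ k ≤ n} Z k)₋`. The running maximum dominates `Z 1`, so this negative
part is at most `K` and vanishes off the persistence event: `L (n + 1) - L n ≤ K P n`. Summing over
`n ≤ m < 2 n`, with `P` antitone, `n K P n ≥ L (2 n) - L n`, and by regular variation the right side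
is asymptotic to `(2 ^ γ - 1) B a n`. The finitely many small `n` are absorbed into the constant.
-/

open MeasureTheory Filter Finset

noncomputable section

def HasStationaryIncrements {Ω : Type*} [MeasurableSpace Ω] (μ : Measure Ω)
    (Z : ℕ → Ω → ℝ) : Prop :=
  ∀ k : ℕ, Measure.map (fun ω => fun n => Z (n + k) ω - Z k ω) μ
    = Measure.map (fun ω => fun n => Z n ω) μ

def RegularlyVarying (a : ℕ → ℝ) (γ : ℝ) : Prop :=
  ∀ lam : ℝ, 0 < lam →
    Filter.Tendsto (fun n : ℕ => a ⌊lam * n⌋₊ / a n) Filter.atTop (nhds (lam ^ γ))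

def runningMax (x : ℕ → ℝ) (n : ℕ) : ℝ := ⨆ k : Finset.Icc 1 n, x k

section RunningMax

variable (x : ℕ → ℝ) {n : ℕ}

lemma runningMax_eq_sup' (hn : 1 ≤ n) :
    runningMax x n = (Finset.Icc 1 n).sup' (nonempty_Icc.2 hn) x := by
  rw [Finset.sup'_eq_csSup_image, runningMax, iSup]
  congr 1
  ext y
  simp

@[simp]
lemma runningMax_zero : runningMax x 0 = 0 :=
  haveI : IsEmpty (Finset.Icc 1 0) := ⟨fun k => by simpa using k.2⟩
  Real.iSup_of_isEmpty _

@[simp]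
lemma runningMax_one : runningMax x 1 = x 1 := by
  simp [runningMax_eq_sup' x le_rfl]

lemma runningMax_succ (hn : 1 ≤ n) :
    runningMax x (n + 1) = max (runningMax x n) (x (n + 1)) := by
  rw [runningMax_eq_sup' x hn, runningMax_eq_sup' x (by omega)]
  simp_rw [← insert_Icc_right_eq_Icc_add_one (by omega : 1 ≤ n + 1)]
  rw [sup'_insert, max_comm]

lemma max_zero_runningMax_succ :
    max 0 (runningMax x (n + 1)) = max (max 0 (runningMax x n)) (x (n + 1)) := by
  rcases Nat.eq_zero_or_pos n with rfl | hn
  · simp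
  · rw [runningMax_succ x hn, max_assoc]

lemma runningMax_succ_sub_one :
    runningMax x (n + 1) - x 1 = max 0 (runningMax (fun k => x (k + 1) - x 1) n) := by
  induction n with
  | zero => simp
  | succ n ih =>
    rw [runningMax_succ x (by omega), ← max_sub_sub_right, ih, max_zero_runningMax_succ]

lemma runningMax_lt_zero_iff (hn : 1 ≤ n) :
    runningMax x n < 0 ↔ ∀ k ∈ Finset.Icc 1 n, x k < 0 := by
  rw [runningMax_eq_sup' x hn, sup'_lt_iff]

lemma le_runningMax {k : ℕ} (hk : k ∈ Finset.Icc 1 n) : x k ≤ runningMax x n := by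
  rw [runningMax_eq_sup' x ((mem_Icc.1 hk).1.trans (mem_Icc.1 hk).2)]
  exact le_sup' x hk

lemma measurable_runningMax (n : ℕ) : Measurable fun x : ℕ → ℝ => runningMax x n :=
  Measurable.iSup fun _ => measurable_pi_apply _

end RunningMax

lemma sub_le_mul_of_forall_succ_sub_le {f : ℕ → ℝ} {n : ℕ} {c : ℝ}
    (h : ∀ m, n ≤ m → f (m + 1) - f m ≤ c) (j : ℕ) : f (n + j) - f n ≤ j * c := by
  induction j with
  | zero => simp
  | succ j ih =>
    have := h (n + j) (Nat.le_add_right n j)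
    push_cast
    rw [← add_assoc]
    linarith

section StationaryIncrements

variable {Ω : Type*} [MeasurableSpace Ω] {μ : Measure Ω} {Z : ℕ → Ω → ℝ}

lemma HasStationaryIncrements.integral_comp (hstat : HasStationaryIncrements μ Z)
    (hmeas : ∀ n, Measurable (Z n)) (k : ℕ) {F : (ℕ → ℝ) → ℝ} (hF : Measurable F) :
    ∫ ω, F (fun n => Z (n + k) ω - Z k ω) ∂μ = ∫ ω, F (fun n => Z n ω) ∂μ := by
  have hshift : Measurable fun ω n => Z (n + k) ω - Z k ω :=
    measurable_pi_lambda _ fun n => (hmeas (n + k)).sub (hmeas k)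
  have hpath : Measurable fun ω n => Z n ω := measurable_pi_lambda _ hmeas
  rw [← integral_map hshift.aemeasurable hF.aestronglyMeasurable, hstat k,
    integral_map hpath.aemeasurable hF.aestronglyMeasurable]

lemma integrable_runningMax (hint : ∀ n, Integrable (Z n) μ) (n : ℕ) :
    Integrable (fun ω => runningMax (Z · ω) n) μ := by
  rcases Nat.eq_zero_or_pos n with rfl | hn
  · simp
  induction n, hn using Nat.le_induction with
  | base => simpa using hint 1
  | succ n hn ih =>
    simp_rw [runningMax_succ _ hn]
    exact ih.sup (hint (n + 1))

lemma integral_runningMax_succ (hmeas : ∀ n, Measurable (Z n))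
    (hstat : HasStationaryIncrements μ Z) (hint : ∀ n, Integrable (Z n) μ)
    (hcent : ∫ ω, Z 1 ω ∂μ = 0) (m : ℕ) :
    ∫ ω, runningMax (Z · ω) (m + 1) ∂μ
      = ∫ ω, runningMax (Z · ω) m ∂μ + ∫ ω, max (-runningMax (Z · ω) m) 0 ∂μ := by
  have hF : Measurable fun x : ℕ → ℝ => max 0 (runningMax x m) :=
    measurable_const.max (measurable_runningMax m)
  have hM := integrable_runningMax hint m
  calc ∫ ω, runningMax (Z · ω) (m + 1) ∂μ
      = ∫ ω, (runningMax (Z · ω) (m + 1) - Z 1 ω) ∂μ := by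
        rw [integral_sub (integrable_runningMax hint _) (hint 1), hcent, sub_zero]
    _ = ∫ ω, max 0 (runningMax (fun n => Z (n + 1) ω - Z 1 ω) m) ∂μ := by
        simp_rw [runningMax_succ_sub_one]
    _ = ∫ ω, max 0 (runningMax (Z · ω) m) ∂μ := hstat.integral_comp hmeas 1 hF
    _ = ∫ ω, (runningMax (Z · ω) m + max (-runningMax (Z · ω) m) 0) ∂μ := by
        congr 1 with ω
        rcases le_total (runningMax (Z · ω) m) 0 with h | h <;> simp [h]
    _ = _ := integral_add hM hM.neg.pos_part

lemma integral_negPart_runningMax_le [IsFiniteMeasure μ] (hmeas : ∀ n, Measurable (Z n))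
    (hint : ∀ n, Integrable (Z n) μ) {K : ℝ} (hbdd : ∀ ω, max (-Z 1 ω) 0 ≤ K) {n : ℕ}
    (hn : 1 ≤ n) :
    ∫ ω, max (-runningMax (Z · ω) n) 0 ∂μ
      ≤ K * μ.real {ω | ∀ ℓ ∈ Finset.Icc 1 n, Z ℓ ω < 0} := by
  have hE : {ω | ∀ ℓ ∈ Finset.Icc 1 n, Z ℓ ω < 0} = {ω | runningMax (Z · ω) n < 0} := by
    ext ω
    exact (runningMax_lt_zero_iff _ hn).symm
  have hEmeas : MeasurableSet {ω | runningMax (Z · ω) n < 0} :=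
    measurableSet_lt ((measurable_runningMax n).comp (measurable_pi_lambda _ hmeas))
      measurable_const
  have hpointwise : ∀ ω, max (-runningMax (Z · ω) n) 0
      ≤ {ω | runningMax (Z · ω) n < 0}.indicator (fun _ => K) ω := by
    intro ω
    simp only [Set.indicator_apply, Set.mem_ofPred_eq]
    split_ifs with hω
    · have hZ1 := le_runningMax (Z · ω) (left_mem_Icc.2 hn)
      exact (max_le_max_right 0 (neg_le_neg hZ1)).trans (hbdd ω)
    · simpa using not_lt.1 hω
  calc ∫ ω, max (-runningMax (Z · ω) n) 0 ∂μ
      ≤ ∫ ω, {ω | runningMax (Z · ω) n < 0}.indicator (fun _ => K) ω ∂μ :=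
        integral_mono (integrable_runningMax hint n).neg.pos_part
          ((integrable_const K).indicator hEmeas) hpointwise
    _ = K * μ.real {ω | ∀ ℓ ∈ Finset.Icc 1 n, Z ℓ ω < 0} := by
        rw [integral_indicator_const K hEmeas, hE, smul_eq_mul, mul_comm]

lemma integral_runningMax_two_mul_sub_le [IsFiniteMeasure μ] (hmeas : ∀ n, Measurable (Z n))
    (hstat : HasStationaryIncrements μ Z) (hint : ∀ n, Integrable (Z n) μ)
    (hcent : ∫ ω, Z 1 ω ∂μ = 0) {K : ℝ} (hK : 0 ≤ K) (hbdd : ∀ ω, max (-Z 1 ω) 0 ≤ K)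
    {n : ℕ} (hn : 1 ≤ n) :
    ∫ ω, runningMax (Z · ω) (2 * n) ∂μ - ∫ ω, runningMax (Z · ω) n ∂μ
      ≤ n * (K * μ.real {ω | ∀ ℓ ∈ Finset.Icc 1 n, Z ℓ ω < 0}) := by
  rw [two_mul]
  refine sub_le_mul_of_forall_succ_sub_le (f := fun m => ∫ ω, runningMax (Z · ω) m ∂μ)
    (fun m hm => ?_) n
  rw [integral_runningMax_succ hmeas hstat hint hcent, add_sub_cancel_left]
  calc ∫ ω, max (-runningMax (Z · ω) m) 0 ∂μ
      ≤ K * μ.real {ω | ∀ ℓ ∈ Finset.Icc 1 m, Z ℓ ω < 0} :=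
        integral_negPart_runningMax_le hmeas hint hbdd (hn.trans hm)
    _ ≤ K * μ.real {ω | ∀ ℓ ∈ Finset.Icc 1 n, Z ℓ ω < 0} :=
        mul_le_mul_of_nonneg_left
          (measureReal_mono fun ω hω ℓ hℓ => hω ℓ (Icc_subset_Icc_right hm hℓ)) hK

end StationaryIncrements

lemma RegularlyVarying.tendsto_two_mul_div {a : ℕ → ℝ} {γ : ℝ}
    (hreg : RegularlyVarying a γ) :
    Tendsto (fun n => a (2 * n) / a n) atTop (nhds (2 ^ γ)) := by
  refine (hreg 2 two_pos).congr fun n => ?_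
  rw [show (2 : ℝ) * n = (2 * n : ℕ) by push_cast; rfl, Nat.floor_natCast]

lemma RegularlyVarying.tendsto_two_mul_sub_div {a L : ℕ → ℝ} {γ B : ℝ}
    (hreg : RegularlyVarying a γ) (hapos : ∀ n, 0 < a n)
    (hL : Tendsto (fun n => L n / a n) atTop (nhds B)) :
    Tendsto (fun n => (L (2 * n) - L n) / a n) atTop (nhds (B * 2 ^ γ - B)) := by
  have hL2 : Tendsto (fun n => L (2 * n) / a (2 * n) * (a (2 * n) / a n)) atTop
      (nhds (B * 2 ^ γ)) :=
    (hL.comp (tendsto_id.const_mul_atTop' two_pos)).mul hreg.tendsto_two_mul_div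
  refine (hL2.sub hL).congr fun n => ?_
  rw [div_mul_div_cancel₀ (hapos _).ne', sub_div]

lemma exists_pos_forall_mul_le_of_eventually {u P : ℕ → ℝ} (hP : Antitone P)
    (hu : ∀ n, 0 ≤ u n) (hu_pos : ∀ᶠ n in atTop, 0 < u n) {c : ℝ} (hc : 0 < c)
    (h : ∀ᶠ n in atTop, c * u n ≤ P n) : ∃ c' > 0, ∀ n, c' * u n ≤ P n := by
  obtain ⟨N, hN⟩ := eventually_atTop.1 (hu_pos.and h)
  have hPN : 0 < P N := (mul_pos hc (hN N le_rfl).1).trans_le (hN N le_rfl).2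
  set A := ∑ k ∈ range N, u k
  have hA : 0 ≤ A := sum_nonneg fun k _ => hu k
  refine ⟨min c (P N / (A + 1)), lt_min hc (by positivity), fun n => ?_⟩
  rcases le_or_gt N n with hn | hn
  · exact (mul_le_mul_of_nonneg_right (min_le_left _ _) (hu n)).trans (hN n hn).2
  · have hun : u n ≤ A + 1 := by
      linarith [single_le_sum (fun k _ => hu k) (mem_range.2 hn)]
    calc min c (P N / (A + 1)) * u n ≤ P N / (A + 1) * (A + 1) :=
          mul_le_mul (min_le_right _ _) hun (hu n) (by positivity)
      _ = P N := div_mul_cancel₀ _ (by positivity)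
      _ ≤ P n := hP hn.le

theorem stmt8_general {Ω : Type*} [MeasurableSpace Ω] (μ : Measure Ω) [IsProbabilityMeasure μ]
    (Z : ℕ → Ω → ℝ) (hmeas : ∀ n, Measurable (Z n))
    (hstat : HasStationaryIncrements μ Z)
    (hint : ∀ n, Integrable (Z n) μ) (hcent : ∀ n, ∫ ω, Z n ω ∂μ = 0)
    (a : ℕ → ℝ) (hapos : ∀ n, 0 < a n)
    (γ : ℝ) (hγ : γ ∈ Set.Ioo (0:ℝ) 1) (hreg : RegularlyVarying a γ)
    (B : ℝ) (hB : 0 < B)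
    (hlim : Filter.Tendsto (fun n : ℕ =>
        (∫ ω, ⨆ k : Finset.Icc 1 n, Z k.1 ω ∂μ) / a n) Filter.atTop (nhds B))
    (K : ℝ) (hbdd : ∀ ω, max (-Z 1 ω) 0 ≤ K) :
    ∃ c > 0, ∀ n : ℕ, 1 ≤ n →
      c * a n / n ≤ (μ {ω | ∀ ℓ ∈ Finset.Icc 1 n, Z ℓ ω < 0}).toReal := by
  have hL : Tendsto (fun n => (∫ ω, runningMax (Z · ω) n ∂μ) / a n) atTop (nhds B) := hlim
  set P : ℕ → ℝ := fun n => μ.real {ω | ∀ ℓ ∈ Finset.Icc 1 n, Z ℓ ω < 0}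
  have hP : Antitone P := fun m n hmn =>
    measureReal_mono fun ω hω ℓ hℓ => hω ℓ (Icc_subset_Icc_right hmn hℓ)
  have hgap : 0 < B * 2 ^ γ - B := by
    nlinarith [Real.one_lt_rpow one_lt_two hγ.1]
  set K' := max K 1
  have hK' : 0 < K' := zero_lt_one.trans_le (le_max_right K 1)
  have hevent : ∀ᶠ n in atTop, (B * 2 ^ γ - B) / 2 / K' * (a n / n) ≤ P n := by
    filter_upwards [(hreg.tendsto_two_mul_sub_div hapos hL).eventually_const_le
      (half_lt_self hgap), eventually_ge_atTop 1] with n hδ hn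
    have hincr : _ ≤ n * (K' * P n) := integral_runningMax_two_mul_sub_le hmeas hstat hint
      (hcent 1) hK'.le (fun ω => (hbdd ω).trans (le_max_left K 1)) hn
    rw [le_div_iff₀ (hapos n)] at hδ
    rw [div_mul_div_comm, div_le_iff₀ (by positivity)]
    linarith
  obtain ⟨c, hc, hcP⟩ := exists_pos_forall_mul_le_of_eventually hP
    (fun n => div_nonneg (hapos n).le n.cast_nonneg)
    ((eventually_ge_atTop 1).mono fun n hn => div_pos (hapos n) (by exact_mod_cast hn))
    (by positivity) hevent
  exact ⟨c, hc, fun n _ => (mul_div_assoc c (a n) n).trans_le (hcP n)⟩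

/-- If `(Z_1)_-` is bounded and the running maximum is `L^p`-controlled by `a_n`,
then the persistence probability is bounded below by `c a_n / n`. -/
theorem stmt8 {Ω : Type*} [MeasurableSpace Ω] (μ : Measure Ω) [IsProbabilityMeasure μ]
    (Z : ℕ → Ω → ℝ) (hmeas : ∀ n, Measurable (Z n)) (hZ0 : ∀ ω, Z 0 ω = 0)
    (hstat : HasStationaryIncrements μ Z)
    (hint : ∀ n, Integrable (Z n) μ) (hcent : ∀ n, ∫ ω, Z n ω ∂μ = 0)
    (a : ℕ → ℝ) (hapos : ∀ n, 0 < a n)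
    (γ : ℝ) (hγ : γ ∈ Set.Ioo (0:ℝ) 1) (hreg : RegularlyVarying a γ)
    (B : ℝ) (hB : 0 < B)
    (hlim : Filter.Tendsto (fun n : ℕ =>
        (∫ ω, ⨆ k : Finset.Icc 1 n, Z k.1 ω ∂μ) / a n) Filter.atTop (nhds B))
    (K : ℝ) (hbdd : ∀ ω, max (-Z 1 ω) 0 ≤ K)
    (p : ℝ) (hp : 1 < p)
    (hLp : ∃ C > 0, ∀ n : ℕ,
        (∫ ω, |⨆ k : Finset.Icc 0 n, Z k.1 ω| ^ p ∂μ) ^ (1 / p) ≤ C * a n) :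
    ∃ c > 0, ∀ n : ℕ, 1 ≤ n →
      c * a n / n ≤ (μ {ω | ∀ ℓ ∈ Finset.Icc 1 n, Z ℓ ω < 0}).toReal :=
  stmt8_general μ Z hmeas hstat hint hcent a hapos γ hγ hreg B hB hlim K hbdd
end
end

section
/- Let $(Z_n)_{n\ge 0}$ be a centered process with stationary increments, $Z_0=0$, and $(a_n)$ regularly varying with exponent $\gamma\in(0,1)$ such that $B:=\lim_n a_n^{-1}\mathbb{E}[\max_{1\le k\le n}Z_k]\in(0,\infty)$. Then $\limsup_{n\to\infty} \frac{n}{a_n}\mathbb{P}(\max_{1\le\ell\le n} Z_\ell \le -1) \le B$. -/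
open MeasureTheory Filter Finset

noncomputable section

/-!
Call `k < n` a drop time if the whole path after `k` up to time `n` stays at least `1` below
`Z k`. At a drop time the running maximum `max_{k ≤ ℓ ≤ n} Z ℓ` decreases by at least `1` when `k`
is replaced by `k + 1`, so telescoping bounds the number of drop times in `[1, n)` by
`max_{1 ≤ ℓ ≤ n} Z ℓ - Z n`. By stationarity of the increments, `k` is a drop time with
probability at least `P(max_{1 ≤ ℓ ≤ n} Z ℓ ≤ -1)`; taking expectations and using `E[Z n] = 0`
gives `(n - 1) P(max_{1 ≤ ℓ ≤ n} Z ℓ ≤ -1) ≤ E[max_{1 ≤ ℓ ≤ n} Z ℓ]`, and `n / (n - 1) → 1`.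
-/

section Deterministic

variable (x : ℕ → ℝ) {n : ℕ}

lemma iSup_Icc_le_iSup_Icc {j k : ℕ} (hjk : j ≤ k) (hk : k ≤ n) :
    ⨆ ℓ : Icc k n, x ℓ ≤ ⨆ ℓ : Icc j n, x ℓ := by
  have : Nonempty (Icc k n) := ⟨⟨k, mem_Icc.2 ⟨le_rfl, hk⟩⟩⟩
  exact ciSup_le fun ℓ => le_ciSup_of_le (Finite.bddAbove_range _)
    ⟨ℓ, Icc_subset_Icc hjk le_rfl ℓ.2⟩ le_rfl

open scoped Classical in
theorem card_filter_drop_le_iSup_sub (hn : 1 ≤ n) :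
    (#{k ∈ Ico 1 n | ∀ ℓ ∈ Icc (k + 1) n, x ℓ ≤ x k - 1} : ℝ)
      ≤ (⨆ k : Icc 1 n, x k) - x n := by
  set m : ℕ → ℝ := fun k => ⨆ ℓ : Icc k n, x ℓ
  have hmn : m n = x n := by
    let : Unique (Icc n n) := ⟨⟨⟨n, by simp⟩⟩, fun ℓ => Subtype.ext (by simpa using ℓ.2)⟩
    exact ciSup_unique (s := fun ℓ : Icc n n => x ℓ)
  have hstep : ∀ k ∈ Ico 1 n,
      (if ∀ ℓ ∈ Icc (k + 1) n, x ℓ ≤ x k - 1 then (1 : ℝ) else 0) ≤ m k - m (k + 1) := by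
    intro k hk
    have hkn : k < n := (mem_Ico.1 hk).2
    split_ifs with hdrop
    · have : Nonempty (Icc (k + 1) n) := ⟨⟨n, mem_Icc.2 ⟨hkn, le_rfl⟩⟩⟩
      have hxk : x k ≤ m k :=
        le_ciSup_of_le (Finite.bddAbove_range _) ⟨k, mem_Icc.2 ⟨le_rfl, hkn.le⟩⟩ le_rfl
      have hnext : m (k + 1) ≤ x k - 1 := ciSup_le fun ℓ => hdrop ℓ ℓ.2
      linarith
    · linarith [iSup_Icc_le_iSup_Icc x (Nat.le_succ k) hkn]
  calc (#{k ∈ Ico 1 n | ∀ ℓ ∈ Icc (k + 1) n, x ℓ ≤ x k - 1} : ℝ)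
      = ∑ k ∈ Ico 1 n, if ∀ ℓ ∈ Icc (k + 1) n, x ℓ ≤ x k - 1 then (1 : ℝ) else 0 := by
        convert natCast_card_filter _ _
    _ ≤ ∑ k ∈ Ico 1 n, (m k - m (k + 1)) := sum_le_sum hstep
    _ = -∑ k ∈ Ico 1 n, (m (k + 1) - m k) := by simp only [← sum_neg_distrib, neg_sub]
    _ = m 1 - m n := by rw [sum_Ico_sub m hn, neg_sub]
    _ = (⨆ k : Icc 1 n, x k) - x n := by rw [hmn]

end Deterministic

section Probabilistic

variable {Ω : Type*} [MeasurableSpace Ω] {μ : Measure Ω} {Z : ℕ → Ω → ℝ}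

theorem MeasureTheory.Integrable.ciSup {ι : Type*} [Fintype ι] [Nonempty ι] {f : ι → Ω → ℝ}
    (hf : ∀ i, Integrable (f i) μ) : Integrable (fun ω => ⨆ i, f i ω) μ := by
  have hsup : (fun ω => ⨆ i, f i ω) = univ.sup' univ_nonempty f := by
    ext ω
    rw [Finset.sup'_apply, sup'_univ_eq_ciSup]
  rw [hsup]
  exact sup'_induction (p := (Integrable · μ)) _ _ (fun _ h₁ _ h₂ => h₁.sup h₂) fun i _ => hf i

theorem measurableSet_forall_mem_le (s : Finset ℕ) {f g : ℕ → Ω → ℝ}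
    (hf : ∀ i, Measurable (f i)) (hg : ∀ i, Measurable (g i)) :
    MeasurableSet {ω | ∀ i ∈ s, f i ω ≤ g i ω} := by
  simp only [Set.ofPred_forall]
  exact .iInter fun i => .iInter fun _ => measurableSet_le (hf i) (hg i)

theorem HasStationaryIncrements.measure_forall_le_eq (hstat : HasStationaryIncrements μ Z)
    (hmeas : ∀ n, Measurable (Z n)) (k m : ℕ) :
    μ {ω | ∀ ℓ ∈ Icc 1 m, Z (ℓ + k) ω - Z k ω ≤ -1} = μ {ω | ∀ ℓ ∈ Icc 1 m, Z ℓ ω ≤ -1} := by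
  have hS : MeasurableSet {z : ℕ → ℝ | ∀ ℓ ∈ Icc 1 m, z ℓ ≤ -1} :=
    measurableSet_forall_mem_le _ (fun ℓ => measurable_pi_apply ℓ) fun _ => measurable_const
  have := congrArg (· {z : ℕ → ℝ | ∀ ℓ ∈ Icc 1 m, z ℓ ≤ -1}) (hstat k)
  rwa [Measure.map_apply (by fun_prop) hS, Measure.map_apply (by fun_prop) hS] at this

theorem HasStationaryIncrements.measure_le_measure_drop (hstat : HasStationaryIncrements μ Z)
    (hmeas : ∀ n, Measurable (Z n)) {k n : ℕ} (hkn : k ≤ n) :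
    μ {ω | ∀ ℓ ∈ Icc 1 n, Z ℓ ω ≤ -1} ≤ μ {ω | ∀ ℓ ∈ Icc (k + 1) n, Z ℓ ω ≤ Z k ω - 1} :=
  calc μ {ω | ∀ ℓ ∈ Icc 1 n, Z ℓ ω ≤ -1}
      ≤ μ {ω | ∀ ℓ ∈ Icc 1 (n - k), Z ℓ ω ≤ -1} :=
        measure_mono fun ω hω ℓ hℓ => hω ℓ (Icc_subset_Icc le_rfl (Nat.sub_le n k) hℓ)
    _ = μ {ω | ∀ ℓ ∈ Icc 1 (n - k), Z (ℓ + k) ω - Z k ω ≤ -1} :=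
        (hstat.measure_forall_le_eq hmeas k _).symm
    _ = μ {ω | ∀ ℓ ∈ Icc (k + 1) n, Z ℓ ω ≤ Z k ω - 1} := by
        congr 1
        ext ω
        simp only [Set.mem_ofPred_eq, mem_Icc]
        constructor
        · intro h ℓ hℓ
          have := h (ℓ - k) (by omega)
          rw [Nat.sub_add_cancel (by omega)] at this
          linarith
        · intro h ℓ hℓ
          linarith [h (ℓ + k) (by omega)]

open scoped Classical in
theorem sub_one_mul_measure_le_integral_iSup [IsFiniteMeasure μ] (hmeas : ∀ n, Measurable (Z n))
    (hstat : HasStationaryIncrements μ Z) (hint : ∀ n, Integrable (Z n) μ)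
    (hcent : ∀ n, ∫ ω, Z n ω ∂μ = 0) {n : ℕ} (hn : 1 ≤ n) :
    ((n : ℝ) - 1) * (μ {ω | ∀ ℓ ∈ Icc 1 n, Z ℓ ω ≤ -1}).toReal
      ≤ ∫ ω, ⨆ k : Icc 1 n, Z k.1 ω ∂μ := by
  set E : ℕ → Set Ω := fun k => {ω | ∀ ℓ ∈ Icc (k + 1) n, Z ℓ ω ≤ Z k ω - 1}
  have hE : ∀ k, MeasurableSet (E k) := fun k =>
    measurableSet_forall_mem_le _ hmeas fun _ => (hmeas k).sub_const 1
  have : Nonempty (Icc 1 n) := ⟨⟨1, mem_Icc.2 ⟨le_rfl, hn⟩⟩⟩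
  have hcount : ∀ ω, ∑ k ∈ Ico 1 n, (E k).indicator 1 ω ≤ (⨆ k : Icc 1 n, Z k.1 ω) - Z n ω := by
    intro ω
    convert card_filter_drop_le_iSup_sub (Z · ω) hn using 1
    rw [natCast_card_filter]
    exact sum_congr rfl fun k _ => by simp [Set.indicator_apply, E]
  calc ((n : ℝ) - 1) * (μ {ω | ∀ ℓ ∈ Icc 1 n, Z ℓ ω ≤ -1}).toReal
      ≤ ∑ k ∈ Ico 1 n, (μ (E k)).toReal := by
        rw [← Nat.cast_pred hn, ← Nat.card_Ico, ← nsmul_eq_mul, ← sum_const]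
        exact sum_le_sum fun k hk => ENNReal.toReal_mono (measure_ne_top μ _)
          (hstat.measure_le_measure_drop hmeas (mem_Ico.1 hk).2.le)
    _ = ∫ ω, ∑ k ∈ Ico 1 n, (E k).indicator 1 ω ∂μ := by
        rw [integral_finsetSum _ fun k _ => (integrable_const 1).indicator (hE k)]
        simp [integral_indicator_one (hE _), measureReal_def]
    _ ≤ ∫ ω, ((⨆ k : Icc 1 n, Z k.1 ω) - Z n ω) ∂μ :=
        integral_mono (integrable_finsetSum _ fun k _ => (integrable_const 1).indicator (hE k))
          ((Integrable.ciSup fun k : Icc 1 n => hint k).sub (hint n)) hcount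
    _ = ∫ ω, ⨆ k : Icc 1 n, Z k.1 ω ∂μ := by
        rw [integral_sub (Integrable.ciSup fun k : Icc 1 n => hint k) (hint n), hcent, sub_zero]

end Probabilistic

theorem stmt9_general {Ω : Type*} [MeasurableSpace Ω] (μ : Measure Ω) [IsProbabilityMeasure μ]
    (Z : ℕ → Ω → ℝ) (hmeas : ∀ n, Measurable (Z n))
    (hstat : HasStationaryIncrements μ Z)
    (hint : ∀ n, Integrable (Z n) μ) (hcent : ∀ n, ∫ ω, Z n ω ∂μ = 0)
    (a : ℕ → ℝ) (hapos : ∀ n, 0 < a n)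
    (B : ℝ)
    (hlim : Filter.Tendsto (fun n : ℕ =>
        (∫ ω, ⨆ k : Finset.Icc 1 n, Z k.1 ω ∂μ) / a n) Filter.atTop (nhds B)) :
    atTop.limsup (fun n : ℕ =>
        (n : ℝ) / a n * (μ {ω | ∀ ℓ ∈ Finset.Icc 1 n, Z ℓ ω ≤ -1}).toReal) ≤ B := by
  set P : ℕ → ℝ := fun n => (μ {ω | ∀ ℓ ∈ Icc 1 n, Z ℓ ω ≤ -1}).toReal
  set I : ℕ → ℝ := fun n => ∫ ω, ⨆ k : Icc 1 n, Z k.1 ω ∂μ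
  have hbound : ∀ᶠ n : ℕ in atTop, n / a n * P n ≤ n / (n - 1) * (I n / a n) := by
    filter_upwards [eventually_ge_atTop 2] with n hn
    have hn' : (0 : ℝ) < n - 1 := by
      have : (2 : ℝ) ≤ n := by exact_mod_cast hn
      linarith
    calc n / a n * P n = n / (n - 1) * (((n - 1) * P n) / a n) := by field_simp
      _ ≤ n / (n - 1) * (I n / a n) := by
        gcongr
        · exact (hapos n).le
        · exact sub_one_mul_measure_le_integral_iSup hmeas hstat hint hcent (by omega)
  have hupper : Tendsto (fun n : ℕ => n / (n - 1) * (I n / a n)) atTop (nhds B) := by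
    simpa [← sub_eq_add_neg] using (tendsto_natCast_div_add_atTop (-1 : ℝ)).mul hlim
  have hnonneg : ∀ n : ℕ, 0 ≤ n / a n * P n := fun n =>
    mul_nonneg (div_nonneg n.cast_nonneg (hapos n).le) ENNReal.toReal_nonneg
  calc atTop.limsup (fun n : ℕ => n / a n * P n)
      ≤ atTop.limsup (fun n : ℕ => n / (n - 1) * (I n / a n)) :=
        limsup_le_limsup hbound (isCoboundedUnder_le_of_le atTop hnonneg)
          hupper.isBoundedUnder_le
    _ = B := hupper.limsup_eq

theorem stmt9 {Ω : Type*} [MeasurableSpace Ω] (μ : Measure Ω) [IsProbabilityMeasure μ]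
    (Z : ℕ → Ω → ℝ) (hmeas : ∀ n, Measurable (Z n)) (hZ0 : ∀ ω, Z 0 ω = 0)
    (hstat : HasStationaryIncrements μ Z)
    (hint : ∀ n, Integrable (Z n) μ) (hcent : ∀ n, ∫ ω, Z n ω ∂μ = 0)
    (a : ℕ → ℝ) (hapos : ∀ n, 0 < a n)
    (γ : ℝ) (hγ : γ ∈ Set.Ioo (0:ℝ) 1) (hreg : RegularlyVarying a γ)
    (B : ℝ) (hB : 0 < B)
    (hlim : Filter.Tendsto (fun n : ℕ =>
        (∫ ω, ⨆ k : Finset.Icc 1 n, Z k.1 ω ∂μ) / a n) Filter.atTop (nhds B)) :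
    atTop.limsup (fun n : ℕ =>
        (n : ℝ) / a n * (μ {ω | ∀ ℓ ∈ Finset.Icc 1 n, Z ℓ ω ≤ -1}).toReal) ≤ B :=
  stmt9_general μ Z hmeas hstat hint hcent a hapos B hlim
end
end
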